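/- Let a > b > 0 and let φ₀, φ₁, φ₂, φ₃ : ℝ → ℝ be Schwartz functions (or just C⁴ with suitable integrability). Define u(x,t) = (1/(2ab(a²−b²))) [ −b³ ∫_{x−at}^{x+at} φ₁(y) dy + a³ ∫_{x−bt}^{x+bt} φ₁(y) dy − ab ∫_{x−at}^{x−bt} ∫₀^{y} φ₂(u') du' dy + ab ∫_{x+bt}^{x+at} ∫₀^{y} φ₂(u') du' dy + b ∫_{x−at}^{x+at} ∫₀^{y} ∫₀^{τ} φ₃(ω) dω dτ dy − a ∫_{x−bt}^{x+bt} ∫₀^{y} ∫₀^{τ} φ₃(ω) dω dτ dy − ab³ φ₀(x+at) − ab³ φ₀(x−at) + a³b φ₀(x+bt) + a³b φ₀(x−bt) ]. Then u satisfies the one-dimensional biwave equation (∂²/∂t² − a²∂²/∂x²)(∂²/∂t² − b²∂²/∂x²)u = 0 on ℝ × (0,∞). -/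

import Mathlib

/-- Second time derivative of `u : ℝ × ℝ → ℝ` (curried, first space then time). -/
noncomputable def dtt (u : ℝ → ℝ → ℝ) (x t : ℝ) : ℝ := iteratedDeriv 2 (fun s => u x s) t

/-- Second space derivative. -/
noncomputable def dxx (u : ℝ → ℝ → ℝ) (x t : ℝ) : ℝ := iteratedDeriv 2 (fun s => u s t) x

/-!
The formula is a superposition of four traveling waves `W (x + v t)` with speeds `v = ±a, ±b`,
whose `C⁴` profiles are combinations of `φ₀` and iterated primitives of `φ₁, φ₂, φ₃`.
The wave operator `∂ₜ² - c² ∂ₓ²` maps a traveling wave of speed `v` to the traveling wave of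
speed `v` with profile `(v² - c²) W''`, so the product of the operators for `c = b` and `c = a`
annihilates each of the four waves.
-/

open Finset

noncomputable def waveOperator (c : ℝ) (u : ℝ → ℝ → ℝ) : ℝ → ℝ → ℝ :=
  fun x t => dtt u x t - c ^ 2 * dxx u x t

noncomputable def primitive (f : ℝ → ℝ) (y : ℝ) : ℝ := ∫ s in (0:ℝ)..y, f s

theorem hasDerivAt_primitive {f : ℝ → ℝ} (hf : Continuous f) (y : ℝ) :
    HasDerivAt (primitive f) (f y) y :=
  (hf.integral_hasStrictDerivAt 0 y).hasDerivAt

theorem contDiff_primitive {f : ℝ → ℝ} {n : ℕ} (hf : ContDiff ℝ n f) :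
    ContDiff ℝ (n + 1 : ℕ) (primitive f) := by
  have hderiv : deriv (primitive f) = f :=
    funext fun y => (hasDerivAt_primitive hf.continuous y).deriv
  rw [Nat.cast_add, Nat.cast_one, contDiff_succ_iff_deriv, hderiv]
  exact ⟨fun y => (hasDerivAt_primitive hf.continuous y).differentiableAt, by simp, hf⟩

theorem intervalIntegral_eq_primitive_sub {f : ℝ → ℝ} (hf : Continuous f) (p q : ℝ) :
    ∫ y in p..q, f y = primitive f q - primitive f p :=
  (intervalIntegral.integral_interval_sub_left (hf.intervalIntegrable 0 q)
    (hf.intervalIntegrable 0 p)).symm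

theorem iteratedDeriv_comp_const_add_mul {F : ℝ → ℝ} {n : ℕ} (hF : ContDiff ℝ n F)
    (x c t : ℝ) :
    iteratedDeriv n (fun s => F (x + c * s)) t = c ^ n * iteratedDeriv n F (x + c * t) := by
  rw [iteratedDeriv_comp_const_mul (f := fun z => F (x + z)) (by fun_prop),
    iteratedDeriv_comp_const_add]

section TravelingWaves

variable {ι : Type*} (s : Finset ι) (F : ι → ℝ → ℝ) (c : ι → ℝ)

theorem waveOperator_sum_travelingWaves
    (hF : ∀ i ∈ s, ContDiff ℝ 2 (F i)) (d : ℝ) :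
    waveOperator d (fun x t => ∑ i ∈ s, F i (x + c i * t)) =
      fun x t => ∑ i ∈ s, ((c i ^ 2 - d ^ 2) • iteratedDeriv 2 (F i)) (x + c i * t) := by
  ext x t
  have htime : dtt (fun x t => ∑ i ∈ s, F i (x + c i * t)) x t =
      ∑ i ∈ s, c i ^ 2 * iteratedDeriv 2 (F i) (x + c i * t) := by
    rw [dtt, iteratedDeriv_fun_sum (f := fun i s => F i (x + c i * s))
      fun i hi => ((hF i hi).comp (by fun_prop)).contDiffAt]
    exact sum_congr rfl fun i hi => iteratedDeriv_comp_const_add_mul (hF i hi) x (c i) t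
  have hspace : dxx (fun x t => ∑ i ∈ s, F i (x + c i * t)) x t =
      ∑ i ∈ s, iteratedDeriv 2 (F i) (x + c i * t) := by
    rw [dxx, iteratedDeriv_fun_sum (f := fun i y => F i (y + c i * t))
      fun i hi => ((hF i hi).comp (by fun_prop)).contDiffAt]
    exact sum_congr rfl fun i _ => congrFun (iteratedDeriv_comp_add_const 2 (F i) (c i * t)) x
  rw [waveOperator, htime, hspace, mul_sum, ← sum_sub_distrib]
  exact sum_congr rfl fun i _ => by simp only [Pi.smul_apply, smul_eq_mul]; ring

theorem waveOperator_waveOperator_sum_travelingWaves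
    (hF : ∀ i ∈ s, ContDiff ℝ 4 (F i)) (d e : ℝ) :
    waveOperator e (waveOperator d (fun x t => ∑ i ∈ s, F i (x + c i * t))) =
      fun x t => ∑ i ∈ s,
        (c i ^ 2 - e ^ 2) * (c i ^ 2 - d ^ 2) * iteratedDeriv 4 (F i) (x + c i * t) := by
  have hF₂ : ∀ i ∈ s, ContDiff ℝ 2 (iteratedDeriv 2 (F i)) := fun i hi => by
    rw [iteratedDeriv_eq_iterate]; exact (hF i hi).iterate_deriv' 2 2
  rw [waveOperator_sum_travelingWaves s F c (fun i hi => (hF i hi).of_le (by norm_num)),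
    waveOperator_sum_travelingWaves s (fun i => (c i ^ 2 - d ^ 2) • iteratedDeriv 2 (F i)) c
      (fun i hi => contDiff_const.smul (hF₂ i hi))]
  ext x t
  refine sum_congr rfl fun i _ => ?_
  rw [Pi.smul_apply, iteratedDeriv_const_smul_field]
  simp only [iteratedDeriv_eq_iterate, ← Function.iterate_add_apply, smul_eq_mul]
  ring

theorem waveOperator_waveOperator_sum_travelingWaves_eq_zero
    (hF : ∀ i ∈ s, ContDiff ℝ 4 (F i)) (a b : ℝ)
    (hc : ∀ i ∈ s, c i ^ 2 = a ^ 2 ∨ c i ^ 2 = b ^ 2) (x t : ℝ) :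
    waveOperator a (waveOperator b (fun x t => ∑ i ∈ s, F i (x + c i * t))) x t = 0 := by
  rw [waveOperator_waveOperator_sum_travelingWaves s F c hF]
  refine sum_eq_zero fun i hi => ?_
  rcases hc i hi with h | h <;> simp [h]

end TravelingWaves

theorem biwave_1d_formula_solves_general (a b : ℝ)
    (φ₀ φ₁ φ₂ φ₃ : ℝ → ℝ)
    (h0 : ContDiff ℝ 4 φ₀) (h1 : ContDiff ℝ 3 φ₁) (h2 : ContDiff ℝ 2 φ₂)
    (h3 : ContDiff ℝ 1 φ₃)
    (u : ℝ → ℝ → ℝ)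
    (hu : ∀ x t, u x t = (1 / (2 * a * b * (a ^ 2 - b ^ 2))) *
      (-(b ^ 3) * (∫ y in (x - a * t)..(x + a * t), φ₁ y)
        + a ^ 3 * (∫ y in (x - b * t)..(x + b * t), φ₁ y)
        - a * b * (∫ y in (x - a * t)..(x - b * t), ∫ u' in (0:ℝ)..y, φ₂ u')
        + a * b * (∫ y in (x + b * t)..(x + a * t), ∫ u' in (0:ℝ)..y, φ₂ u')
        + b * (∫ y in (x - a * t)..(x + a * t), ∫ τ in (0:ℝ)..y, ∫ ω in (0:ℝ)..τ, φ₃ ω)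
        - a * (∫ y in (x - b * t)..(x + b * t), ∫ τ in (0:ℝ)..y, ∫ ω in (0:ℝ)..τ, φ₃ ω)
        - a * b ^ 3 * φ₀ (x + a * t) - a * b ^ 3 * φ₀ (x - a * t)
        + a ^ 3 * b * φ₀ (x + b * t) + a ^ 3 * b * φ₀ (x - b * t))) :
    ∀ x t, 0 < t →
      dtt (fun x t => dtt u x t - b ^ 2 * dxx u x t) x t
        - a ^ 2 * dxx (fun x t => dtt u x t - b ^ 2 * dxx u x t) x t = 0 := by
  have hP₁ : ContDiff ℝ (3 + 1 : ℕ) (primitive φ₁) := contDiff_primitive h1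
  have hP₂ : ContDiff ℝ (2 + 1 + 1 : ℕ) (primitive (primitive φ₂)) :=
    contDiff_primitive (contDiff_primitive h2)
  have hP₃ : ContDiff ℝ (1 + 1 + 1 + 1 : ℕ) (primitive (primitive (primitive φ₃))) :=
    contDiff_primitive (contDiff_primitive (contDiff_primitive h3))
  set k := 1 / (2 * a * b * (a ^ 2 - b ^ 2))
  let c : Fin 4 → ℝ := ![a, -a, b, -b]
  let W : Fin 4 → ℝ → ℝ := fun i y => k * (![-b ^ 3, b ^ 3, a ^ 3, -a ^ 3] i * primitive φ₁ y
    + ![a * b, a * b, -(a * b), -(a * b)] i * primitive (primitive φ₂) y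
    + ![b, -b, -a, a] i * primitive (primitive (primitive φ₃)) y
    + ![-(a * b ^ 3), -(a * b ^ 3), a ^ 3 * b, a ^ 3 * b] i * φ₀ y)
  have hu_waves : u = fun x t => ∑ i, W i (x + c i * t) := by
    ext x t
    have e₁ : ∀ p q, ∫ y in p..q, φ₁ y = primitive φ₁ q - primitive φ₁ p :=
      intervalIntegral_eq_primitive_sub h1.continuous
    have e₂ : ∀ p q, ∫ y in p..q, ∫ u' in (0:ℝ)..y, φ₂ u' =
        primitive (primitive φ₂) q - primitive (primitive φ₂) p :=
      intervalIntegral_eq_primitive_sub (contDiff_primitive h2).continuous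
    have e₃ : ∀ p q, ∫ y in p..q, ∫ τ in (0:ℝ)..y, ∫ ω in (0:ℝ)..τ, φ₃ ω =
        primitive (primitive (primitive φ₃)) q - primitive (primitive (primitive φ₃)) p :=
      intervalIntegral_eq_primitive_sub (contDiff_primitive (contDiff_primitive h3)).continuous
    rw [hu, e₁, e₁, e₂, e₂, e₃, e₃]
    simp only [Fin.sum_univ_four, W, c, Matrix.cons_val_zero, Matrix.cons_val_one,
      Matrix.cons_val_two, Matrix.cons_val_three, Matrix.head_cons, Matrix.tail_cons, neg_mul,
      ← sub_eq_add_neg]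
    ring
  intro x t _
  change waveOperator a (waveOperator b u) x t = 0
  rw [hu_waves]
  refine waveOperator_waveOperator_sum_travelingWaves_eq_zero univ W c (fun i _ => ?_) a b
    (fun i _ => ?_) x t
  · fun_prop
  · fin_cases i <;> simp [c]

/-- The explicit d'Alembert-type formula solves the one-dimensional biwave equation
`(∂²/∂t² − a²∂²/∂x²)(∂²/∂t² − b²∂²/∂x²)u = 0` on `ℝ × (0,∞)`. -/
theorem biwave_1d_formula_solves (a b : ℝ) (hab : b < a) (hb : 0 < b)
    (φ₀ φ₁ φ₂ φ₃ : ℝ → ℝ)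
    (h0 : ContDiff ℝ 4 φ₀) (h1 : ContDiff ℝ 3 φ₁) (h2 : ContDiff ℝ 2 φ₂)
    (h3 : ContDiff ℝ 1 φ₃)
    (u : ℝ → ℝ → ℝ)
    (hu : ∀ x t, u x t = (1 / (2 * a * b * (a ^ 2 - b ^ 2))) *
      (-(b ^ 3) * (∫ y in (x - a * t)..(x + a * t), φ₁ y)
        + a ^ 3 * (∫ y in (x - b * t)..(x + b * t), φ₁ y)
        - a * b * (∫ y in (x - a * t)..(x - b * t), ∫ u' in (0:ℝ)..y, φ₂ u')
        + a * b * (∫ y in (x + b * t)..(x + a * t), ∫ u' in (0:ℝ)..y, φ₂ u')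
        + b * (∫ y in (x - a * t)..(x + a * t), ∫ τ in (0:ℝ)..y, ∫ ω in (0:ℝ)..τ, φ₃ ω)
        - a * (∫ y in (x - b * t)..(x + b * t), ∫ τ in (0:ℝ)..y, ∫ ω in (0:ℝ)..τ, φ₃ ω)
        - a * b ^ 3 * φ₀ (x + a * t) - a * b ^ 3 * φ₀ (x - a * t)
        + a ^ 3 * b * φ₀ (x + b * t) + a ^ 3 * b * φ₀ (x - b * t))) :
    ∀ x t, 0 < t →
      dtt (fun x t => dtt u x t - b ^ 2 * dxx u x t) x t
        - a ^ 2 * dxx (fun x t => dtt u x t - b ^ 2 * dxx u x t) x t = 0 :=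
  biwave_1d_formula_solves_general a b φ₀ φ₁ φ₂ φ₃ h0 h1 h2 h3 u hu
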